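/- arXiv:2106.07772 — 2 statements merged into one kernel-verified Lean document; each statement's English description precedes it below -/
import Mathlib

section
/- Let r ≥ 3, k ≥ 0, and let G be a graph of order r+k+1 with maximum degree Δ(G) < r+k that is (K_{1,r}; k)-vertex stable. Then r is even, k is odd, and G is isomorphic to the complete graph K_{r+k+1} minus a perfect matching (i.e., G is (r+k−1)-regular with every vertex having exactly one non-neighbour). -/
/-- The star graph `K_{1,r}`: center `none`, leaves `some i`. -/
def starG (r : ℕ) : SimpleGraph (Option (Fin r)) where
  Adj a b := a ≠ b ∧ (a = none ∨ b = none)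
  symm := ⟨fun a b h => ⟨h.1.symm, h.2.symm⟩⟩
  loopless := ⟨fun a h => h.1 rfl⟩

/-- The join `K_{k+1} * \bar K_r`: clique part `Sum.inl`, independent part `Sum.inr`. -/
def joinKE (k r : ℕ) : SimpleGraph (Fin (k + 1) ⊕ Fin r) where
  Adj a b := a ≠ b ∧ (a.isLeft ∨ b.isLeft)
  symm := ⟨fun a b h => ⟨h.1.symm, h.2.symm⟩⟩
  loopless := ⟨fun a h => h.1 rfl⟩

/-- The complete graph on `n` vertices minus a perfect matching (vertices `2m`, `2m+1` paired). -/
def compMM (n : ℕ) : SimpleGraph (Fin n) where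
  Adj i j := (i : ℕ) / 2 ≠ (j : ℕ) / 2
  symm := ⟨fun i j h => h.symm⟩
  loopless := ⟨fun i h => h rfl⟩

/-- `G` contains a subgraph isomorphic to `H`. -/
def ContainsIso {α β : Type*} (H : SimpleGraph α) (G : SimpleGraph β) : Prop :=
  ∃ f : α → β, Function.Injective f ∧ ∀ a b, H.Adj a b → G.Adj (f a) (f b)

/-- `G` is `(H; k)`-vertex stable: after deleting any `k` vertices, a copy of `H` remains. -/
def VertexStable {α β : Type*} (H : SimpleGraph α) (k : ℕ) (G : SimpleGraph β) : Prop :=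
  ∀ F : Finset β, F.card = k →
    ∃ f : α → β, Function.Injective f ∧ (∀ a, f a ∉ F) ∧
      ∀ a b, H.Adj a b → G.Adj (f a) (f b)

/-!
In `Gᶜ` every vertex has a neighbour, since `Δ(G) < |V| - 1`. Applying stability to the complement
of an `(r+1)`-set `S` gives a star whose centre dominates `S` in `G`, i.e. is isolated in `Gᶜ[S]`;
so no `(r+1)`-set induces a subgraph of `Gᶜ` without isolated vertices.

A graph without isolated vertices that is not a perfect matching has induced subgraphs without
isolated vertices of every order `m ≥ 2`: delete vertices one at a time as long as some vertex has
two neighbours, and once a perfect matching remains, take matching edges, together with one path of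
length two when `m` is odd. A perfect matching has them of every even order. Hence `Gᶜ` is a
perfect matching and `r + 1` is odd. Finally `|V|` is even, and any two fixed-point-free
involutions of a finite set are conjugate (same cycle type), which yields the isomorphism.
-/

open Equiv Finset

theorem Equiv.Perm.cycleType_eq_replicate_two {α : Type*} [Fintype α] [DecidableEq α]
    {σ : Perm α} (hσ : Function.Involutive σ) (hfix : ∀ x, σ x ≠ x) :
    σ.cycleType = Multiset.replicate (Fintype.card α / 2) 2 := by
  have hsq : σ ^ 2 = 1 := Equiv.ext fun x => hσ x
  have hrep := cycleType_of_pow_prime_eq_one hsq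
  have hsum := σ.sum_cycleType
  rw [eq_univ_of_forall fun x => mem_support.2 (hfix x), card_univ, hrep,
    Multiset.sum_replicate, smul_eq_mul] at hsum
  rw [hrep]
  congr 1
  omega

theorem Equiv.Perm.isConj_of_involutive {α : Type*} [Fintype α] [DecidableEq α]
    {σ τ : Perm α} (hσ : Function.Involutive σ) (hσfix : ∀ x, σ x ≠ x)
    (hτ : Function.Involutive τ) (hτfix : ∀ x, τ x ≠ x) : IsConj σ τ := by
  rw [isConj_iff_cycleType_eq, cycleType_eq_replicate_two hσ hσfix,
    cycleType_eq_replicate_two hτ hτfix]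

namespace SimpleGraph

section IsolatedVertices

variable {V : Type*} (H : SimpleGraph V)

def NoIsolatedOn (S : Finset V) : Prop := ∀ u ∈ S, ∃ w ∈ S, H.Adj u w

def IsPerfectMatchingOn (S : Finset V) : Prop := ∀ u ∈ S, ∃! w, w ∈ S ∧ H.Adj u w

variable {H} {S T : Finset V} {u v w : V}

lemma NoIsolatedOn.exists_cherry (hS : H.NoIsolatedOn S) (hS' : ¬H.IsPerfectMatchingOn S) :
    ∃ v ∈ S, ∃ a ∈ S, ∃ b ∈ S, a ≠ b ∧ H.Adj v a ∧ H.Adj v b := by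
  simp only [IsPerfectMatchingOn, not_forall] at hS'
  obtain ⟨v, hv, hnu⟩ := hS'
  obtain ⟨a, ha, hva⟩ := hS v hv
  obtain ⟨b, ⟨hb, hvb⟩, hba⟩ : ∃ b, (b ∈ S ∧ H.Adj v b) ∧ b ≠ a := by
    by_contra! h
    exact hnu ⟨a, ⟨ha, hva⟩, fun b hb => h b hb⟩
  exact ⟨v, hv, a, ha, b, hb, hba.symm, hva, hvb⟩

variable [DecidableEq V]

lemma noIsolatedOn_pair (h : H.Adj u w) : H.NoIsolatedOn {u, w} := by
  intro x hx
  rcases Finset.mem_insert.1 hx with rfl | hx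
  · exact ⟨w, by simp, h⟩
  · rw [Finset.mem_singleton.1 hx]
    exact ⟨u, by simp, h.symm⟩

lemma NoIsolatedOn.insert_of_adj (hS : H.NoIsolatedOn S) (hw : w ∈ S) (huw : H.Adj u w) :
    H.NoIsolatedOn (insert u S) := by
  intro x hx
  rcases Finset.mem_insert.1 hx with rfl | hx
  · exact ⟨w, Finset.mem_insert_of_mem hw, huw⟩
  · obtain ⟨y, hy, hxy⟩ := hS x hx
    exact ⟨y, Finset.mem_insert_of_mem hy, hxy⟩

lemma NoIsolatedOn.union (hS : H.NoIsolatedOn S) (hT : H.NoIsolatedOn T) :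
    H.NoIsolatedOn (S ∪ T) := by
  intro x hx
  rcases Finset.mem_union.1 hx with hx | hx
  · obtain ⟨y, hy, hxy⟩ := hS x hx
    exact ⟨y, Finset.mem_union_left _ hy, hxy⟩
  · obtain ⟨y, hy, hxy⟩ := hT x hx
    exact ⟨y, Finset.mem_union_right _ hy, hxy⟩

/-- If removing `a` isolates some `y`, then `a` was the only neighbour of `y`, and removing `y`
instead isolates nobody, since `a` keeps its neighbour `v`. -/
lemma NoIsolatedOn.exists_erase (hS : H.NoIsolatedOn S) (hv : v ∈ S) {a b : V} (ha : a ∈ S)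
    (hb : b ∈ S) (hab : a ≠ b) (hva : H.Adj v a) (hvb : H.Adj v b) :
    ∃ x ∈ S, H.NoIsolatedOn (S.erase x) := by
  by_cases hA : H.NoIsolatedOn (S.erase a)
  · exact ⟨a, ha, hA⟩
  simp only [NoIsolatedOn, not_forall, not_exists, not_and] at hA
  obtain ⟨y, hy, hyIso⟩ := hA
  have hyS : y ∈ S := Finset.mem_of_mem_erase hy
  have hyv : y ≠ v := by
    rintro rfl
    exact hyIso b (Finset.mem_erase.2 ⟨hab.symm, hb⟩) hvb
  refine ⟨y, hyS, fun x hx => ?_⟩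
  obtain ⟨z, hzS, hxz⟩ := hS x (Finset.mem_of_mem_erase hx)
  by_cases hzy : z = y
  · subst hzy
    have hxa : x = a := by
      by_contra hxa
      exact hyIso x (Finset.mem_erase.2 ⟨hxa, Finset.mem_of_mem_erase hx⟩) hxz.symm
    subst hxa
    exact ⟨v, Finset.mem_erase.2 ⟨hyv.symm, hv⟩, hva.symm⟩
  · exact ⟨z, Finset.mem_erase.2 ⟨hzy, hzS⟩, hxz⟩

lemma IsPerfectMatchingOn.erase_erase (hS : H.IsPerfectMatchingOn S) (hu : u ∈ S)
    (hw : w ∈ S) (huw : H.Adj u w) : H.IsPerfectMatchingOn ((S.erase u).erase w) := by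
  have nbr_unique : ∀ {x y}, x ∈ S → y ∈ S → H.Adj x y → ∀ {z}, z ∈ S → H.Adj x z → z = y :=
    fun hx hy hxy _ hz hxz => (hS _ hx).unique ⟨hz, hxz⟩ ⟨hy, hxy⟩
  intro x hx
  have hxw : x ≠ w := Finset.ne_of_mem_erase hx
  have hxu : x ≠ u := Finset.ne_of_mem_erase (Finset.mem_of_mem_erase hx)
  have hxS : x ∈ S := Finset.mem_of_mem_erase (Finset.mem_of_mem_erase hx)
  obtain ⟨y, ⟨hyS, hxy⟩, hy⟩ := hS x hxS
  have hyu : y ≠ u := by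
    rintro rfl
    exact hxw (nbr_unique hu hw huw hxS hxy.symm)
  have hyw : y ≠ w := by
    rintro rfl
    exact hxu (nbr_unique hw hu huw.symm hxS hxy.symm)
  refine ⟨y, ⟨Finset.mem_erase.2 ⟨hyw, Finset.mem_erase.2 ⟨hyu, hyS⟩⟩, hxy⟩, ?_⟩
  rintro z ⟨hz, hxz⟩
  exact hy z ⟨Finset.mem_of_mem_erase (Finset.mem_of_mem_erase hz), hxz⟩

lemma IsPerfectMatchingOn.exists_noIsolatedOn_card (hS : H.IsPerfectMatchingOn S) (j : ℕ)
    (hj : 2 * j ≤ S.card) : ∃ T ⊆ S, T.card = 2 * j ∧ H.NoIsolatedOn T := by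
  induction j generalizing S with
  | zero => exact ⟨∅, Finset.empty_subset _, rfl, fun _ h => absurd h (Finset.notMem_empty _)⟩
  | succ j ih =>
    obtain ⟨u, hu⟩ := Finset.card_pos.1 (by omega : 0 < S.card)
    obtain ⟨w, ⟨hw, huw⟩, -⟩ := hS u hu
    have hwu : w ∈ S.erase u := Finset.mem_erase.2 ⟨huw.ne.symm, hw⟩
    obtain ⟨T, hTS, hT, hTiso⟩ := ih (hS.erase_erase hu hw huw) (by
      rw [Finset.card_erase_of_mem hwu, Finset.card_erase_of_mem hu]; omega)
    have hdisj : Disjoint {u, w} T := by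
      simp only [Finset.disjoint_insert_left, Finset.disjoint_singleton_left]
      exact ⟨fun h => by simpa using hTS h, fun h => by simpa using hTS h⟩
    refine ⟨{u, w} ∪ T, Finset.union_subset ?_ (hTS.trans ?_), ?_, ?_⟩
    · simp [Finset.insert_subset_iff, hu, hw]
    · exact (Finset.erase_subset _ _).trans (Finset.erase_subset _ _)
    · rw [Finset.card_union_of_disjoint hdisj, Finset.card_pair huw.ne, hT]; ring
    · exact (noIsolatedOn_pair huw).union hTiso

lemma NoIsolatedOn.exists_noIsolatedOn_card (hS : H.NoIsolatedOn S)
    (hS' : ¬H.IsPerfectMatchingOn S) {m : ℕ} (hm : 2 ≤ m) (hmS : m ≤ S.card) :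
    ∃ T ⊆ S, T.card = m ∧ H.NoIsolatedOn T := by
  induction S using Finset.strongInduction with
  | H S ih =>
  rcases hmS.eq_or_lt with rfl | hmS
  · exact ⟨S, subset_rfl, rfl, hS⟩
  obtain ⟨v, hv, a, ha, b, hb, hab, hva, hvb⟩ := hS.exists_cherry hS'
  obtain ⟨x, hx, hSx⟩ := hS.exists_erase hv ha hb hab hva hvb
  have hcard : (S.erase x).card = S.card - 1 := Finset.card_erase_of_mem hx
  have hsub : S.erase x ⊆ S := Finset.erase_subset _ _
  by_cases hSx' : H.IsPerfectMatchingOn (S.erase x)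
  swap
  · obtain ⟨T, hT, hTm, hTiso⟩ := ih _ (Finset.erase_ssubset hx) hSx hSx' (by omega)
    exact ⟨T, hT.trans hsub, hTm, hTiso⟩
  rcases Nat.even_or_odd' m with ⟨j, rfl | rfl⟩
  · obtain ⟨T, hT, hTm, hTiso⟩ := hSx'.exists_noIsolatedOn_card j (by omega)
    exact ⟨T, hT.trans hsub, hTm, hTiso⟩
  -- odd `m`: a path `x w w'` with `w'` the partner of `w`, plus matching edges
  obtain ⟨w, hwS, hxw⟩ := hS x hx
  have hw : w ∈ S.erase x := Finset.mem_erase.2 ⟨hxw.ne.symm, hwS⟩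
  obtain ⟨w', ⟨hw', hww'⟩, -⟩ := hSx' w hw
  have hw'x : w' ≠ x := Finset.ne_of_mem_erase hw'
  have hw'w : w' ∈ (S.erase x).erase w := Finset.mem_erase.2 ⟨hww'.ne.symm, hw'⟩
  obtain ⟨T, hTS, hT, hTiso⟩ := (hSx'.erase_erase hw hw' hww').exists_noIsolatedOn_card (j - 1)
    (by rw [Finset.card_erase_of_mem hw'w, Finset.card_erase_of_mem hw]; omega)
  have hTS' : T ⊆ S := hTS.trans <| ((Finset.erase_subset _ _).trans
    (Finset.erase_subset _ _)).trans hsub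
  have hdisj : Disjoint (insert x {w, w'}) T := by
    simp only [Finset.disjoint_insert_left, Finset.disjoint_singleton_left]
    refine ⟨?_, ?_, ?_⟩ <;> intro h <;> simpa using hTS h
  refine ⟨insert x {w, w'} ∪ T, Finset.union_subset ?_ hTS', ?_, ?_⟩
  · simp [Finset.insert_subset_iff, hx, hwS, hsub hw']
  · rw [Finset.card_union_of_disjoint hdisj, hT, Finset.card_insert_of_notMem
      (by simp [hxw.ne, hw'x.symm]), Finset.card_pair hww'.ne]
    omega
  · exact ((noIsolatedOn_pair hww').insert_of_adj (by simp) hxw).union hTiso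

theorem isPerfectMatchingOn_and_odd_of_forall_not_noIsolatedOn (hS : H.NoIsolatedOn S)
    {m : ℕ} (hm : 2 ≤ m) (hmS : m ≤ S.card) (hno : ∀ T ⊆ S, T.card = m → ¬H.NoIsolatedOn T) :
    H.IsPerfectMatchingOn S ∧ Odd m := by
  have hmatch : H.IsPerfectMatchingOn S := by
    by_contra h
    obtain ⟨T, hTS, hTm, hT⟩ := hS.exists_noIsolatedOn_card h hm hmS
    exact hno T hTS hTm hT
  refine ⟨hmatch, Nat.not_even_iff_odd.1 fun ⟨j, hj⟩ => ?_⟩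
  obtain ⟨T, hTS, hTm, hT⟩ := hmatch.exists_noIsolatedOn_card j (by omega)
  exact hno T hTS (by omega) hT

end IsolatedVertices

section Partner

variable {V W : Type*} {H : SimpleGraph V}

lemma adj_iff_eq_choose (hH : ∀ v, ∃! w, H.Adj v w) {v w : V} :
    H.Adj v w ↔ w = (hH v).choose :=
  ⟨fun h => (hH v).unique h (hH v).choose_spec.1, fun h => h ▸ (hH v).choose_spec.1⟩

noncomputable def partner (hH : ∀ v, ∃! w, H.Adj v w) : Perm V :=
  Function.Involutive.toPerm (fun v => (hH v).choose) fun _ =>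
    ((adj_iff_eq_choose hH).1 ((adj_iff_eq_choose hH).2 rfl).symm).symm

lemma adj_iff_eq_partner (hH : ∀ v, ∃! w, H.Adj v w) {v w : V} : H.Adj v w ↔ w = partner hH v :=
  adj_iff_eq_choose hH

lemma partner_involutive (hH : ∀ v, ∃! w, H.Adj v w) : Function.Involutive (partner hH) :=
  Function.Involutive.toPerm_involutive _

lemma partner_ne (hH : ∀ v, ∃! w, H.Adj v w) (v : V) : partner hH v ≠ v :=
  (((adj_iff_eq_partner hH).2 rfl).ne).symm

lemma even_card_of_existsUnique_adj [Fintype V] (hH : ∀ v, ∃! w, H.Adj v w) :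
    Even (Fintype.card V) :=
  (Subgraph.isPerfectMatching_iff (M := (⊤ : H.Subgraph)) |>.2 (by simpa using hH)).even_card

theorem nonempty_iso_of_existsUnique_adj [Fintype V] [Fintype W] {H' : SimpleGraph W}
    (hH : ∀ v, ∃! w, H.Adj v w) (hH' : ∀ v, ∃! w, H'.Adj v w)
    (hcard : Fintype.card V = Fintype.card W) : Nonempty (H ≃g H') := by
  classical
  let e := Fintype.equivOfCardEq hcard
  obtain ⟨c, hc⟩ := isConj_iff.1 <| Perm.isConj_of_involutive (σ := e.permCongr (partner hH))
    (fun x => by simp [partner_involutive hH _]) (fun _ => e.eq_symm_apply.not.1 (partner_ne hH _))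
    (partner_involutive hH') (partner_ne hH')
  refine ⟨⟨e.trans c, fun {u w} => ?_⟩⟩
  rw [adj_iff_eq_partner hH', adj_iff_eq_partner hH, ← hc]
  simp

def Iso.compl {H' : SimpleGraph W} (f : H ≃g H') : Hᶜ ≃g H'ᶜ :=
  ⟨f.toEquiv, by simp [f.map_adj_iff]⟩

end Partner

lemma exists_compl_adj_of_ncard_neighborSet_lt {V : Type*} [Fintype V]
    {G : SimpleGraph V} {v : V} (h : (G.neighborSet v).ncard < Fintype.card V - 1) :
    ∃ w, Gᶜ.Adj v w := by
  classical
  rw [← degree_pos_iff_exists_adj, degree_compl]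
  rw [Set.ncard_eq_toFinset_card', Set.toFinset_card, card_neighborSet_eq_degree] at h
  omega

end SimpleGraph

open SimpleGraph

lemma VertexStable.not_noIsolatedOn_compl {V : Type*} [Fintype V] [DecidableEq V]
    {G : SimpleGraph V} {r k : ℕ} (hG : VertexStable (starG r) k G) {S : Finset V}
    (hS : S.card = r + 1) (hSc : Sᶜ.card = k) : ¬Gᶜ.NoIsolatedOn S := by
  intro hiso
  obtain ⟨f, hinj, havoid, hadj⟩ := hG Sᶜ hSc
  have himg : univ.image f = S := eq_of_subset_of_card_le
    (fun x hx => by obtain ⟨a, -, rfl⟩ := mem_image.1 hx; simpa using havoid a)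
    (by rw [hS, card_image_of_injective _ hinj]; simp)
  obtain ⟨w, hw, hcw⟩ := hiso (f none) (himg ▸ mem_image_of_mem f (mem_univ _))
  obtain ⟨a, -, rfl⟩ := mem_image.1 (himg ▸ hw)
  cases a with
  | none => exact hcw.ne rfl
  | some i => exact ((compl_adj _ _ _).1 hcw).2 (hadj none (some i) (by simp [starG]))

lemma compMM_compl_existsUnique_adj {n : ℕ} (hn : Even n) (i : Fin n) :
    ∃! j, (compMM n)ᶜ.Adj i j := by
  obtain ⟨t, rfl⟩ := hn
  have hi := i.isLt
  refine ⟨⟨if (i : ℕ) % 2 = 0 then i + 1 else i - 1, by split <;> omega⟩, ?_, ?_⟩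
  · simp only [compl_adj, compMM, ne_eq, not_not, Fin.ext_iff]
    split <;> omega
  · intro j hj
    simp only [compl_adj, compMM, ne_eq, not_not, Fin.ext_iff] at hj ⊢
    split <;> omega

theorem stmt_7 {V : Type*} [Fintype V] (G : SimpleGraph V) (r k : ℕ)
    (hr : 3 ≤ r) (hcard : Fintype.card V = r + k + 1)
    (hdeg : ∀ v : V, (G.neighborSet v).ncard < r + k)
    (hstab : VertexStable (starG r) k G) :
    Even r ∧ Odd k ∧ Nonempty (G ≃g compMM (r + k + 1)) := by
  classical
  have hnoIso : Gᶜ.NoIsolatedOn univ := fun v _ => by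
    obtain ⟨w, hw⟩ := exists_compl_adj_of_ncard_neighborSet_lt (by rw [hcard]; exact hdeg v)
    exact ⟨w, mem_univ w, hw⟩
  obtain ⟨hmatch, hodd⟩ := isPerfectMatchingOn_and_odd_of_forall_not_noIsolatedOn hnoIso
    (m := r + 1) (by omega) (by simp [hcard]) fun T _ hT =>
      hstab.not_noIsolatedOn_compl hT (by rw [card_compl, hT, hcard]; omega)
  have hunique : ∀ v, ∃! w, Gᶜ.Adj v w := by simpa [IsPerfectMatchingOn] using hmatch
  have hEven : Even (r + k + 1) := hcard ▸ even_card_of_existsUnique_adj hunique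
  have hrEven : Even r := by simpa [parity_simps] using hodd
  refine ⟨hrEven, by simpa [hrEven, parity_simps] using hEven, ?_⟩
  simpa using (nonempty_iso_of_existsUnique_adj hunique (compMM_compl_existsUnique_adj hEven)
    (by simp [hcard])).map Iso.compl
end

section
/- Let r ≥ 4 be even and k ≥ (r−1)² be even. The graph obtained by adding one vertex joined to all vertices of the (r+k−2)-regular graph K_{r+k} minus a perfect matching is (K_{1,r}; k)-vertex stable and has exactly (1/2)(r+k)² edges. -/
/-- The cone over a graph: one new vertex (`none`) joined to all old vertices. -/
def coneG {n : ℕ} (G : SimpleGraph (Fin n)) : SimpleGraph (Option (Fin n)) where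
  Adj a b :=
    match a, b with
    | none, none => False
    | none, some _ => True
    | some _, none => True
    | some i, some j => G.Adj i j
  symm := by
    constructor
    intro a b h
    match a, b with
    | none, none => exact h
    | none, some _ => trivial
    | some _, none => trivial
    | some i, some j => exact h.symm
  loopless := by
    constructor
    intro a h
    match a with
    | none => exact h
    | some i => exact G.loopless.irrefl i h

/-!
Deleting `k` of the `r + k + 1` vertices leaves `r + 1`. If the cone vertex survives, it is the
centre of a star on the others. Otherwise `r + 1` vertices of `K_{r+k}` minus a perfect matching
survive; as `r + 1` is odd, some survivor has lost its matching partner and is adjacent to all the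
other `r` survivors. The edge count is the handshake lemma with degrees `r + k` and `r + k - 1`.
-/

open Finset

namespace Finset

theorem exists_forall_fiber_eq_of_odd_card {α β : Type*} [DecidableEq α] [DecidableEq β]
    (f : α → β) {s : Finset α} (hs : Odd #s) (hfiber : ∀ b, #{a ∈ s | f a = b} ≤ 2) :
    ∃ a ∈ s, ∀ a' ∈ s, f a' = f a → a' = a := by
  by_contra! h
  have hpair : ∀ b ∈ s.image f, #{a ∈ s | f a = b} = 2 := by
    intro b hb
    obtain ⟨a, ha, rfl⟩ := mem_image.1 hb
    obtain ⟨a', ha', hfa, hne⟩ := h a ha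
    refine le_antisymm (hfiber _) ?_
    rw [← card_pair hne]
    exact card_le_card (by simp [insert_subset_iff, ha, ha', hfa])
  have hcard : #s = 2 * #(s.image f) := by
    rw [card_eq_sum_card_fiberwise (fun a ha => mem_image_of_mem f ha), sum_congr rfl hpair,
      sum_const, smul_eq_mul, mul_comm]
  exact Nat.not_even_iff_odd.2 hs ⟨_, hcard.trans (two_mul _)⟩

end Finset

section Star

variable {β : Type*} {G : SimpleGraph β} {r k : ℕ}

theorem exists_starG_embedding_of_forall_adj (c : β) {s : Finset β} (hs : r ≤ #s)
    (hadj : ∀ v ∈ s, G.Adj c v) :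
    ∃ f : Option (Fin r) → β, Function.Injective f ∧ (∀ a, f a = c ∨ f a ∈ s) ∧
      ∀ a b, (starG r).Adj a b → G.Adj (f a) (f b) := by
  obtain ⟨t, hts, rfl⟩ := exists_subset_card_eq hs
  let g : Fin #t → β := fun i => t.equivFin.symm i
  have hg : ∀ i, g i ∈ s := fun i => hts (t.equivFin.symm i).2
  have hcg : ∀ i, c ≠ g i := fun i => (hadj _ (hg i)).ne
  refine ⟨fun o => o.elim c g, ?_, fun o => ?_, ?_⟩
  · rintro (_ | i) (_ | j) h
    · rfl
    · exact absurd h (hcg j)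
    · exact absurd h.symm (hcg i)
    · exact congrArg some (t.equivFin.symm.injective (Subtype.ext h))
  · cases o
    · exact .inl rfl
    · exact .inr (hg _)
  · rintro (_ | i) (_ | j) ⟨hne, hnone⟩
    · exact absurd rfl hne
    · exact hadj _ (hg j)
    · exact (hadj _ (hg i)).symm
    · simp at hnone

theorem vertexStable_starG_of_forall_exists_center
    (h : ∀ F : Finset β, #F = k → ∃ c ∉ F, ∃ s : Finset β, r ≤ #s ∧ Disjoint s F ∧
      ∀ v ∈ s, G.Adj c v) :
    VertexStable (starG r) k G := by
  intro F hF
  obtain ⟨c, hcF, s, hs, hsF, hadj⟩ := h F hF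
  obtain ⟨f, hf, hfs, hfadj⟩ := exists_starG_embedding_of_forall_adj c hs hadj
  refine ⟨f, hf, fun a => ?_, hfadj⟩
  rcases hfs a with ha | ha
  · exact ha ▸ hcF
  · exact disjoint_left.1 hsF ha

end Star

namespace compMM

instance (n : ℕ) : DecidableRel (compMM n).Adj :=
  fun i j => inferInstanceAs (Decidable ((i : ℕ) / 2 ≠ (j : ℕ) / 2))

theorem card_filter_div_two_eq_le_two {n : ℕ} (s : Finset (Fin n)) (m : ℕ) :
    #{i ∈ s | ((i : Fin n) : ℕ) / 2 = m} ≤ 2 :=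
  calc #{i ∈ s | ((i : Fin n) : ℕ) / 2 = m}
      ≤ #({2 * m, 2 * m + 1} : Finset ℕ) :=
        card_le_card_of_injOn Fin.val (fun i hi => by grind) Fin.val_injective.injOn
    _ ≤ 2 := card_le_two

theorem card_filter_div_two_eq {n : ℕ} (hn : Even n) (i : Fin n) :
    #{j : Fin n | (j : ℕ) / 2 = (i : ℕ) / 2} = 2 := by
  have hodd : 2 * ((i : ℕ) / 2) + 1 < n := by obtain ⟨m, rfl⟩ := hn; omega
  calc #{j : Fin n | (j : ℕ) / 2 = (i : ℕ) / 2}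
      = #(({j : Fin n | (j : ℕ) / 2 = (i : ℕ) / 2} : Finset (Fin n)).map Fin.valEmbedding) :=
        (card_map _).symm
    _ = #({2 * ((i : ℕ) / 2), 2 * ((i : ℕ) / 2) + 1} : Finset ℕ) := by
      congr 1
      ext x
      simp only [mem_map, mem_filter, mem_univ, true_and, Fin.valEmbedding_apply, mem_insert,
        mem_singleton]
      constructor
      · rintro ⟨j, hj, rfl⟩
        omega
      · intro hx
        exact ⟨⟨x, by omega⟩, by simp only; omega, rfl⟩
    _ = 2 := card_pair (by omega)

theorem degree_eq {n : ℕ} (hn : Even n) (i : Fin n) : (compMM n).degree i = n - 2 := by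
  have hsplit := card_filter_add_card_filter_not (s := univ)
    (fun j : Fin n => (j : ℕ) / 2 = (i : ℕ) / 2)
  rw [card_filter_div_two_eq hn i, card_univ, Fintype.card_fin] at hsplit
  rw [← SimpleGraph.card_neighborFinset_eq_degree, SimpleGraph.neighborFinset_eq_filter]
  simp only [compMM, ne_comm (a := (i : ℕ) / 2), ne_eq]
  omega

end compMM

namespace coneG

variable {n : ℕ} (G : SimpleGraph (Fin n))

@[simp]
theorem adj_none_some (i : Fin n) : (coneG G).Adj none (some i) := trivial

@[simp]
theorem adj_some_none (i : Fin n) : (coneG G).Adj (some i) none := trivial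

@[simp]
theorem adj_some_some (i j : Fin n) : (coneG G).Adj (some i) (some j) ↔ G.Adj i j := Iff.rfl

variable [DecidableRel G.Adj]

instance : DecidableRel (coneG G).Adj
  | none, none => .isFalse id
  | none, some _ => .isTrue trivial
  | some _, none => .isTrue trivial
  | some i, some j => inferInstanceAs (Decidable (G.Adj i j))

theorem degree_none : (coneG G).degree none = n := by
  have : (coneG G).neighborFinset none = univ.map .some := by
    ext (_ | _) <;> simp
  rw [← SimpleGraph.card_neighborFinset_eq_degree, this, card_map, card_univ, Fintype.card_fin]

theorem degree_some (i : Fin n) : (coneG G).degree (some i) = G.degree i + 1 := by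
  have : (coneG G).neighborFinset (some i) = insertNone (G.neighborFinset i) := by
    ext (_ | _) <;> simp
  rw [← SimpleGraph.card_neighborFinset_eq_degree, this, card_insertNone,
    SimpleGraph.card_neighborFinset_eq_degree]

end coneG

theorem two_mul_ncard_edgeSet_coneG_compMM {n : ℕ} (hn : Even n) :
    2 * (coneG (compMM n)).edgeSet.ncard = n ^ 2 := by
  rw [← SimpleGraph.coe_edgeFinset, Set.ncard_coe_finset,
    ← SimpleGraph.sum_degrees_eq_twice_card_edges, Fintype.sum_option, coneG.degree_none]
  simp only [coneG.degree_some, compMM.degree_eq hn, sum_const, card_univ, Fintype.card_fin,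
    smul_eq_mul]
  obtain rfl | ⟨m, rfl⟩ : n = 0 ∨ ∃ m, n = m + 2 := by
    obtain ⟨m, rfl⟩ := hn
    rcases m with _ | m
    · exact .inl rfl
    · exact .inr ⟨2 * m, by ring⟩
  · rfl
  · rw [Nat.add_sub_cancel]
    ring

theorem vertexStable_starG_coneG_compMM {r : ℕ} (hr : Even r) (k : ℕ) :
    VertexStable (starG r) k (coneG (compMM (r + k))) := by
  refine vertexStable_starG_of_forall_exists_center fun F hF => ?_
  set S : Finset (Fin (r + k)) := F.eraseNoneᶜ with hSdef
  have hmemS : ∀ i, i ∈ S ↔ some i ∉ F := by simp [hSdef]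
  have hS : #S = r + k - #F.eraseNone := by rw [card_compl, Fintype.card_fin]
  have hdisj : ∀ T ⊆ S, Disjoint (T.map .some) F := by
    simp only [disjoint_left, mem_map, Function.Embedding.some_apply]
    rintro T hTS _ ⟨j, hj, rfl⟩
    exact (hmemS j).1 (hTS hj)
  by_cases hnone : none ∈ F
  · have hSodd : #S = r + 1 := by
      have := card_pos.2 ⟨none, hnone⟩
      rw [card_eraseNone_of_mem hnone] at hS
      omega
    obtain ⟨c, hcS, hc⟩ :=
      exists_forall_fiber_eq_of_odd_card (fun i : Fin (r + k) => (i : ℕ) / 2) (hSodd ▸ hr.add_one)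
        (compMM.card_filter_div_two_eq_le_two S)
    refine ⟨some c, (hmemS c).1 hcS, (S.erase c).map .some, ?_, ?_, ?_⟩
    · rw [card_map, card_erase_of_mem hcS, hSodd, Nat.add_sub_cancel]
    · exact hdisj _ (erase_subset c S)
    · simp only [mem_map, mem_erase, Function.Embedding.some_apply]
      rintro _ ⟨j, ⟨hjc, hjS⟩, rfl⟩
      exact fun h => hjc (hc j hjS h.symm)
  · refine ⟨none, hnone, S.map .some, ?_, ?_, ?_⟩
    · rw [card_map, hS, card_eraseNone_of_not_mem hnone, hF, Nat.add_sub_cancel]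
    · exact hdisj S subset_rfl
    · simp

theorem stmt_16_general (r k : ℕ) (hre : Even r) (hke : Even k) :
    VertexStable (starG r) k (coneG (compMM (r + k))) ∧
      2 * (coneG (compMM (r + k))).edgeSet.ncard = (r + k) ^ 2 :=
  ⟨vertexStable_starG_coneG_compMM hre k, two_mul_ncard_edgeSet_coneG_compMM (hre.add hke)⟩

theorem stmt_16 (r k : ℕ) (hr : 4 ≤ r) (hre : Even r) (hke : Even k)
    (hk : (r - 1) ^ 2 ≤ k) :
    VertexStable (starG r) k (coneG (compMM (r + k))) ∧
      2 * (coneG (compMM (r + k))).edgeSet.ncard = (r + k) ^ 2 :=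
  stmt_16_general r k hre hke
end
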